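/- arXiv:1110.2063 — 3 statements merged into one kernel-verified Lean document; each statement's English description precedes it below -/
import Mathlib

section
/- Let d ≥ 1, let B ⊆ ℝ^d be measurable, let I ⊆ ℝ be an open interval, and let ζ : ℝ^d × ℝ → ℝ^d be such that for each t ∈ I the map ζ(·,t) is injective on B and differentiable at every s ∈ B with Jacobian F(s,t) satisfying det F(s,t) > 0. Let ρ₀ : ℝ^d → ℝ, and let ρ : ℝ^d × ℝ → ℝ satisfy the Lagrangian mass balance ρ(ζ(s,t),t) · det F(s,t) = ρ₀(s) for all s ∈ B and t ∈ I. Let ψ, ψ̇ : ℝ^d × ℝ → ℝ be such that for every s ∈ B and t ∈ I the map τ ↦ ψ(ζ(s,τ),τ) is differentiable at t with derivative ψ̇(ζ(s,t),t). Assume further that: for each t ∈ I the map s ↦ ρ₀(s)·ψ(ζ(s,t),t) is integrable on B and s ↦ ρ₀(s)·ψ̇(ζ(s,t),t) is almost-everywhere strongly measurable on B; and there is an integrable g : B → ℝ such that |ρ₀(s)·ψ̇(ζ(s,τ),τ)| ≤ g(s) for almost every s ∈ B and every τ ∈ I. Then for every t₀ ∈ I the function t ↦ ∫_{ζ(·,t)(B)}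 ρ(x,t)·ψ(x,t) dx has derivative at t₀ equal to ∫_{ζ(·,t₀)(B)} ρ(x,t₀)·ψ̇(x,t₀) dx. -/
open MeasureTheory Filter Set Topology TopologicalSpace Interval

/-! Pulling back along `ζ(·, t)`, the change-of-variables formula and the mass balance turn the
integral over `B_t` into `∫_B ρ₀(s) ψ(ζ(s, t), t) ds`, over a fixed domain, so the claim is
differentiation under the integral sign. The bound on `ρ₀ ψ̇` only holds, for each `τ`, off an
`s`-null set depending on `τ`. The integrand is continuous in `t` and measurable in `s`, hence
(after discarding a null set of `s`) jointly measurable, and so is its `t`-derivative; Fubini then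
yields, for a.e. `s`, the bound for a.e. `τ`, and the fundamental theorem of calculus turns this
into a Lipschitz bound in `t`, which is what dominated differentiation needs. -/

theorem measurable_of_continuous_of_forall_mem_dense {ι α β : Type*} [TopologicalSpace ι]
    [FrechetUrysohnSpace ι] [MeasurableSpace α] [TopologicalSpace β] [PseudoMetrizableSpace β]
    [MeasurableSpace β] [BorelSpace β] {u : ι → α → β} (hcont : ∀ x, Continuous fun i => u i x)
    {D : Set ι} (hD : Dense D) (hmeas : ∀ i ∈ D, Measurable (u i)) (i : ι) :
    Measurable (u i) := by
  obtain ⟨q, hqD, hq⟩ := mem_closure_iff_seq_limit.1 (hD.closure_eq ▸ mem_univ i)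
  exact measurable_of_tendsto_metrizable (fun n => hmeas _ (hqD n))
    (tendsto_pi_nhds.2 fun x => ((hcont x).tendsto i).comp hq)

theorem exists_measurable_uncurry_ae_eq_of_ae_continuous {ι α β : Type*} [TopologicalSpace ι]
    [MetrizableSpace ι] [MeasurableSpace ι] [SecondCountableTopology ι] [OpensMeasurableSpace ι]
    [MeasurableSpace α] [TopologicalSpace β] [PseudoMetrizableSpace β] [MeasurableSpace β]
    [BorelSpace β] [Nonempty β] {μ : Measure α} {u : ι → α → β}
    (hcont : ∀ᵐ x ∂μ, Continuous fun i => u i x) (hmeas : ∀ i, AEMeasurable (u i) μ) :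
    ∃ v : ι → α → β, Measurable (Function.uncurry v) ∧ ∀ᵐ x ∂μ, ∀ i, v i x = u i x := by
  obtain ⟨D, hDc, hD⟩ := exists_countable_dense ι
  have hgood : ∀ᵐ x ∂μ, (Continuous fun i => u i x) ∧ ∀ i ∈ D, u i x = (hmeas i).mk _ x :=
    hcont.and ((ae_ball_iff hDc).2 fun i _ => (hmeas i).ae_eq_mk)
  obtain ⟨G, hGae, hGm, hG⟩ := hgood.exists_measurable_mem
  classical
  let v : ι → α → β := fun i x => if x ∈ G then u i x else Classical.arbitrary β
  have hv_cont : ∀ x, Continuous fun i => v i x := fun x => by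
    by_cases hx : x ∈ G
    · simpa [v, hx] using (hG x hx).1
    · simpa [v, hx] using continuous_const
  have hv_meas : ∀ i ∈ D, Measurable (v i) := fun i hi => by
    have : v i = G.piecewise ((hmeas i).mk _) fun _ => Classical.arbitrary β := by
      ext x
      by_cases hx : x ∈ G
      · simp [v, hx, (hG x hx).2 i hi]
      · simp [v, hx]
    rw [this]
    exact (hmeas i).measurable_mk.piecewise hGm measurable_const
  refine ⟨v, measurable_uncurry_of_continuous_of_measurable hv_cont
    (measurable_of_continuous_of_forall_mem_dense hv_cont hD hv_meas), ?_⟩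
  filter_upwards [hGae] with x hx i
  simp [v, hx]

theorem exists_measurable_uncurry_ae_eq_of_hasDerivAt {α E : Type*} [MeasurableSpace α]
    [NormedAddCommGroup E] [NormedSpace ℝ E] [MeasurableSpace E] [BorelSpace E]
    [SecondCountableTopology E] {μ : Measure α} {f f' : ℝ → α → E}
    (hf : Measurable (Function.uncurry f)) {U : Set ℝ} (hU : MeasurableSet U)
    (hderiv : ∀ᵐ x ∂μ, ∀ t ∈ U, HasDerivAt (f · x) (f' t x) t) :
    ∃ G : ℝ → α → E, Measurable (Function.uncurry G) ∧ ∀ᵐ x ∂μ, ∀ t ∈ U, G t x = f' t x := by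
  obtain ⟨S, hSae, hSm, hS⟩ := hderiv.exists_measurable_mem
  classical
  refine ⟨fun t x => if (t, x) ∈ U ×ˢ S then f' t x else 0, ?_, ?_⟩
  · refine measurable_of_tendsto_metrizable (f := fun (n : ℕ) (p : ℝ × α) =>
      if p ∈ U ×ˢ S then slope (f · p.2) p.1 (p.1 + ((n : ℝ) + 1)⁻¹) else 0) (fun n => ?_) ?_
    · refine Measurable.ite (hU.prod hSm) ?_ measurable_const
      simp only [slope_def_module]
      fun_prop
    · refine tendsto_pi_nhds.2 fun p => ?_
      by_cases hp : p ∈ U ×ˢ S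
      · simp only [Function.uncurry, if_pos hp]
        have hshift : Tendsto (fun n : ℕ => p.1 + ((n : ℝ) + 1)⁻¹) atTop (𝓝[≠] p.1) := by
          refine tendsto_nhdsWithin_iff.2 ⟨?_, Eventually.of_forall fun n => ?_⟩
          · simpa using (tendsto_one_div_add_atTop_nhds_zero_nat.const_add p.1)
          · simp only [mem_compl_iff, mem_singleton_iff, add_eq_left]
            positivity
        exact (hasDerivAt_iff_tendsto_slope.1 (hS p.2 hp.2 p.1 hp.1)).comp hshift
      · simp only [Function.uncurry, if_neg hp]
        exact tendsto_const_nhds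
  · filter_upwards [hSae] with x hx t ht
    simp [ht, hx]

theorem lipschitzOnWith_of_hasDerivAt_of_ae_norm_le {E : Type*} [NormedAddCommGroup E]
    [NormedSpace ℝ E] [CompleteSpace E] {φ φ' : ℝ → E} {s : Set ℝ} {C : ℝ}
    (hs : s.OrdConnected) (hderiv : ∀ t ∈ s, HasDerivAt φ (φ' t) t)
    (hbound : ∀ᵐ t ∂volume.restrict s, ‖φ' t‖ ≤ C) :
    LipschitzOnWith (Real.nnabs C) φ s := by
  refine lipschitzOnWith_iff_norm_sub_le.2 fun y hy x hx => ?_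
  have hsub : Ι x y ⊆ s := Ioc_subset_Icc_self.trans (hs.uIcc_subset hx hy)
  have hbound' : ∀ᵐ t, t ∈ Ι x y → ‖φ' t‖ ≤ C :=
    (ae_restrict_iff' measurableSet_uIoc).1 (ae_restrict_of_ae_restrict_of_subset hsub hbound)
  have hmeas : AEStronglyMeasurable φ' (volume.restrict (Ι x y)) :=
    (aestronglyMeasurable_deriv φ _).congr <|
      (ae_restrict_iff' measurableSet_uIoc).2 <| .of_forall fun t ht =>
        (hderiv t (hsub ht)).deriv
  have hint : IntervalIntegrable φ' volume x y :=
    intervalIntegrable_const.mono_fun' hmeas ((ae_restrict_iff' measurableSet_uIoc).2 hbound')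
  calc ‖φ y - φ x‖ = ‖∫ t in x..y, φ' t‖ := by
        rw [intervalIntegral.integral_eq_sub_of_hasDerivAt
          (fun t ht => hderiv t (hs.uIcc_subset hx hy ht)) hint]
    _ ≤ C * |y - x| := intervalIntegral.norm_integral_le_of_norm_le_const_ae hbound'
    _ ≤ Real.nnabs C * ‖y - x‖ := by
        rw [Real.coe_nnabs, Real.norm_eq_abs]
        exact mul_le_mul_of_nonneg_right (le_abs_self C) (abs_nonneg _)

theorem ae_lipschitzOnWith_of_hasDerivAt_of_forall_ae_norm_le {α E : Type*} [MeasurableSpace α]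
    [NormedAddCommGroup E] [NormedSpace ℝ E] [CompleteSpace E] [MeasurableSpace E]
    [BorelSpace E] [SecondCountableTopology E] {μ : Measure α} [SFinite μ]
    {f f' : ℝ → α → E} {g : α → ℝ} {c e : ℝ}
    (hf : ∀ t ∈ Icc c e, AEMeasurable (f t) μ)
    (hderiv : ∀ᵐ x ∂μ, ∀ t ∈ Icc c e, HasDerivAt (f · x) (f' t x) t)
    (hg : AEMeasurable g μ) (hbound : ∀ t ∈ Ioo c e, ∀ᵐ x ∂μ, ‖f' t x‖ ≤ g x) :
    ∀ᵐ x ∂μ, LipschitzOnWith (Real.nnabs (g x)) (f · x) (Icc c e) := by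
  rcases lt_or_ge e c with hec | hce
  · simp [Icc_eq_empty_of_lt hec]
  -- Clamping time to `[c, e]` makes the integrand continuous in `t` on all of `ℝ`.
  have hcont : ∀ᵐ x ∂μ, Continuous fun t => f (projIcc c e hce t) x :=
    hderiv.mono fun x hx => (continuousOn_of_forall_continuousAt fun t ht =>
      (hx t ht).continuousAt).comp_continuous continuous_projIcc.subtype_val fun t =>
        (projIcc c e hce t).2
  obtain ⟨v, hv_meas, hv⟩ :=
    exists_measurable_uncurry_ae_eq_of_ae_continuous hcont fun t => hf _ (projIcc c e hce t).2
  have hv_deriv : ∀ᵐ x ∂μ, ∀ t ∈ Ioo c e, HasDerivAt (v · x) (f' t x) t := by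
    filter_upwards [hderiv, hv] with x hx hvx t ht
    refine (hx t (Ioo_subset_Icc_self ht)).congr_of_eventuallyEq ?_
    filter_upwards [Icc_mem_nhds ht.1 ht.2] with τ hτ
    simp [hvx, projIcc_of_mem hce hτ]
  obtain ⟨G, hG_meas, hG⟩ :=
    exists_measurable_uncurry_ae_eq_of_hasDerivAt hv_meas measurableSet_Ioo hv_deriv
  have hbound_ae : ∀ᵐ x ∂μ, ∀ᵐ t ∂volume.restrict (Ioo c e), ‖G t x‖ ≤ hg.mk g x := by
    refine (Measure.ae_ae_comm ?_).1 ?_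
    · exact measurableSet_le hG_meas.norm (hg.measurable_mk.comp measurable_snd)
    · filter_upwards [ae_restrict_mem measurableSet_Ioo] with t ht
      filter_upwards [hbound t ht, hG, hg.ae_eq_mk] with x hx hGx hgx
      rw [hGx t ht, ← hgx]
      exact hx
  filter_upwards [hderiv, hbound_ae, hG, hg.ae_eq_mk] with x hx hbx hGx hgx
  refine lipschitzOnWith_of_hasDerivAt_of_ae_norm_le ordConnected_Icc hx ?_
  rw [← Measure.restrict_congr_set Ioo_ae_eq_Icc]
  filter_upwards [hbx, ae_restrict_mem measurableSet_Ioo] with t ht htI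
  rw [← hGx t htI, hgx]
  exact ht

theorem setIntegral_image_mul_eq_of_mass_balance {d : ℕ} {B : Set (Fin d → ℝ)}
    (hB : MeasurableSet B) {f : (Fin d → ℝ) → Fin d → ℝ}
    {F : (Fin d → ℝ) → Matrix (Fin d) (Fin d) ℝ}
    (hf : ∀ s ∈ B, HasFDerivWithinAt f (LinearMap.toContinuousLinearMap (F s).mulVecLin) B s)
    (hinj : InjOn f B) (hdet : ∀ s ∈ B, 0 < (F s).det) {ρ ρ₀ : (Fin d → ℝ) → ℝ}
    (hmass : ∀ s ∈ B, ρ (f s) * (F s).det = ρ₀ s) (φ : (Fin d → ℝ) → ℝ) :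
    ∫ x in f '' B, ρ x * φ x = ∫ s in B, ρ₀ s * φ (f s) := by
  rw [integral_image_eq_integral_abs_det_fderiv_smul volume hB hf hinj]
  refine setIntegral_congr_fun hB fun s hs => ?_
  rw [LinearMap.det_toContinuousLinearMap, ← Matrix.toLin'_apply', LinearMap.det_toLin',
    abs_of_pos (hdet s hs), smul_eq_mul, ← hmass s hs]
  ring

theorem stmt5_general {d : ℕ} (B : Set (Fin d → ℝ)) (hB : MeasurableSet B)
    (a b : ℝ) (I : Set ℝ) (hI : I = Set.Ioo a b)
    (ζ : (Fin d → ℝ) × ℝ → Fin d → ℝ)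
    (F : (Fin d → ℝ) → ℝ → Matrix (Fin d) (Fin d) ℝ)
    (hinj : ∀ t ∈ I, Set.InjOn (fun s => ζ (s, t)) B)
    (hF : ∀ t ∈ I, ∀ s ∈ B,
      HasFDerivAt (fun s' => ζ (s', t)) (LinearMap.toContinuousLinearMap (F s t).mulVecLin) s)
    (hdet : ∀ t ∈ I, ∀ s ∈ B, 0 < (F s t).det)
    (ρ₀ : (Fin d → ℝ) → ℝ) (ρ : (Fin d → ℝ) × ℝ → ℝ)
    (hmass : ∀ s ∈ B, ∀ t ∈ I, ρ (ζ (s, t), t) * (F s t).det = ρ₀ s)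
    (ψ ψdot : (Fin d → ℝ) × ℝ → ℝ)
    (hψ : ∀ s ∈ B, ∀ t ∈ I,
      HasDerivAt (fun τ => ψ (ζ (s, τ), τ)) (ψdot (ζ (s, t), t)) t)
    (hint : ∀ t ∈ I, IntegrableOn (fun s => ρ₀ s * ψ (ζ (s, t), t)) B)
    (hmeas : ∀ t ∈ I,
      AEStronglyMeasurable (fun s => ρ₀ s * ψdot (ζ (s, t), t)) (volume.restrict B))
    (g : (Fin d → ℝ) → ℝ) (hg : IntegrableOn g B)
    (hbound : ∀ τ ∈ I, ∀ᵐ s ∂(volume.restrict B), |ρ₀ s * ψdot (ζ (s, τ), τ)| ≤ g s) :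
    ∀ t₀ ∈ I,
      HasDerivAt (fun t => ∫ x in (fun s => ζ (s, t)) '' B, ρ (x, t) * ψ (x, t))
        (∫ x in (fun s => ζ (s, t₀)) '' B, ρ (x, t₀) * ψdot (x, t₀)) t₀ := by
  subst hI
  intro t₀ ht₀
  have hpull : ∀ t ∈ Ioo a b, ∀ φ : (Fin d → ℝ) × ℝ → ℝ,
      ∫ x in (fun s => ζ (s, t)) '' B, ρ (x, t) * φ (x, t) =
        ∫ s in B, ρ₀ s * φ (ζ (s, t), t) := fun t ht φ =>
    setIntegral_image_mul_eq_of_mass_balance hB (fun s hs => (hF t ht s hs).hasFDerivWithinAt)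
      (hinj t ht) (hdet t ht) (fun s hs => hmass s hs t ht) (fun x => φ (x, t))
  obtain ⟨ε, hε, hball⟩ := Metric.nhds_basis_closedBall.mem_iff.1 (Ioo_mem_nhds ht₀.1 ht₀.2)
  rw [Real.closedBall_eq_Icc] at hball
  have hlip := ae_lipschitzOnWith_of_hasDerivAt_of_forall_ae_norm_le
    (f := fun t s => ρ₀ s * ψ (ζ (s, t), t)) (f' := fun t s => ρ₀ s * ψdot (ζ (s, t), t))
    (fun t ht => (hint t (hball ht)).aemeasurable)
    (ae_restrict_of_forall_mem hB fun s hs t ht => (hψ s hs t (hball ht)).const_mul (ρ₀ s))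
    hg.aemeasurable fun t ht => hbound t (hball (Ioo_subset_Icc_self ht))
  have hΦ := (hasDerivAt_integral_of_dominated_loc_of_lip
    (Icc_mem_nhds (by linarith) (by linarith))
    (eventually_of_mem (Ioo_mem_nhds ht₀.1 ht₀.2) fun t ht => (hint t ht).aestronglyMeasurable)
    (hint t₀ ht₀) (hmeas t₀ ht₀) hlip hg
    (ae_restrict_of_forall_mem hB fun s hs => (hψ s hs t₀ ht₀).const_mul (ρ₀ s))).2
  rw [hpull t₀ ht₀]
  exact hΦ.congr_of_eventuallyEq <|
    eventually_of_mem (Ioo_mem_nhds ht₀.1 ht₀.2) fun t ht => hpull t ht ψ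

/-- Transport theorem for densities per unit mass over a moving body:
`d/dt ∫_{B_t} ρψ dv = ∫_{B_t} ρψ̇ dv`, where `B_t = ζ(·,t)(B)` and the spatial density `ρ`
satisfies the Lagrangian mass balance `ρ(ζ(s,t),t)·det F(s,t) = ρ₀(s)`. -/
theorem stmt5 {d : ℕ} (hd : 1 ≤ d) (B : Set (Fin d → ℝ)) (hB : MeasurableSet B)
    (a b : ℝ) (I : Set ℝ) (hI : I = Set.Ioo a b)
    (ζ : (Fin d → ℝ) × ℝ → Fin d → ℝ)
    (F : (Fin d → ℝ) → ℝ → Matrix (Fin d) (Fin d) ℝ)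
    (hinj : ∀ t ∈ I, Set.InjOn (fun s => ζ (s, t)) B)
    (hF : ∀ t ∈ I, ∀ s ∈ B,
      HasFDerivAt (fun s' => ζ (s', t)) (LinearMap.toContinuousLinearMap (F s t).mulVecLin) s)
    (hdet : ∀ t ∈ I, ∀ s ∈ B, 0 < (F s t).det)
    (ρ₀ : (Fin d → ℝ) → ℝ) (ρ : (Fin d → ℝ) × ℝ → ℝ)
    (hmass : ∀ s ∈ B, ∀ t ∈ I, ρ (ζ (s, t), t) * (F s t).det = ρ₀ s)
    (ψ ψdot : (Fin d → ℝ) × ℝ → ℝ)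
    (hψ : ∀ s ∈ B, ∀ t ∈ I,
      HasDerivAt (fun τ => ψ (ζ (s, τ), τ)) (ψdot (ζ (s, t), t)) t)
    (hint : ∀ t ∈ I, IntegrableOn (fun s => ρ₀ s * ψ (ζ (s, t), t)) B)
    (hmeas : ∀ t ∈ I,
      AEStronglyMeasurable (fun s => ρ₀ s * ψdot (ζ (s, t), t)) (volume.restrict B))
    (g : (Fin d → ℝ) → ℝ) (hg : IntegrableOn g B)
    (hbound : ∀ τ ∈ I, ∀ᵐ s ∂(volume.restrict B), |ρ₀ s * ψdot (ζ (s, τ), τ)| ≤ g s) :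
    ∀ t₀ ∈ I,
      HasDerivAt (fun t => ∫ x in (fun s => ζ (s, t)) '' B, ρ (x, t) * ψ (x, t))
        (∫ x in (fun s => ζ (s, t₀)) '' B, ρ (x, t₀) * ψdot (x, t₀)) t₀ :=
  stmt5_general B hB a b I hI ζ F hinj hF hdet ρ₀ ρ hmass ψ ψdot hψ hint hmeas g hg hbound
end

section
/- Let d ≥ 1, let B ⊆ ℝ^d be measurable, and let ζ : ℝ^d → ℝ^d be injective on B and differentiable at every s ∈ B with Jacobian F(s). Suppose there are constants J_m > 0 and C ≥ 0 such that det F(s) ≥ J_m and the operator norm ‖F(s)‖ ≤ C for all s ∈ B. Let u : ℝ^d → ℝ^d be differentiable at every point of ζ(B) with Jacobian Du, and suppose x ↦ ‖u(x)‖² + ‖Du(x)‖² is integrable on ζ(B). Then ∫_B ( ‖u(ζ(s))‖² + ‖Du(ζ(s)) · F(s)‖² ) ds ≤ J_m⁻¹ · (1 + C²) · ∫_{ζ(B)} ( ‖u(x)‖² + ‖Du(x)‖² ) dx, where the norms on Jacobians are operator norms and the matrix product Du(ζ(s))·F(s) is the Jacobian of u∘ζ at s. -/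
open MeasureTheory

/-- The paper's `H¹(B)`-estimate for the solid velocity `w' = u∘ζ`:
`∫_B ‖u∘ζ‖² + ‖(Du∘ζ)F‖² ≤ J_m⁻¹ (1 + C²) ∫_{ζ(B)} ‖u‖² + ‖Du‖²`, where `F` is the
deformation gradient with `det F ≥ J_m > 0` and `‖F‖ ≤ C` in operator norm. -/
theorem stmt6 {d : ℕ} (hd : 1 ≤ d) (B : Set (EuclideanSpace ℝ (Fin d)))
    (hB : MeasurableSet B)
    (ζ : EuclideanSpace ℝ (Fin d) → EuclideanSpace ℝ (Fin d)) (hinj : Set.InjOn ζ B)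
    (F : EuclideanSpace ℝ (Fin d) → EuclideanSpace ℝ (Fin d) →L[ℝ] EuclideanSpace ℝ (Fin d))
    (hF : ∀ s ∈ B, HasFDerivAt ζ (F s) s)
    (Jm C : ℝ) (hJm : 0 < Jm) (hC : 0 ≤ C)
    (hdet : ∀ s ∈ B, Jm ≤ LinearMap.det ((F s) : EuclideanSpace ℝ (Fin d) →ₗ[ℝ] EuclideanSpace ℝ (Fin d)))
    (hnorm : ∀ s ∈ B, ‖F s‖ ≤ C)
    (u : EuclideanSpace ℝ (Fin d) → EuclideanSpace ℝ (Fin d))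
    (Du : EuclideanSpace ℝ (Fin d) → EuclideanSpace ℝ (Fin d) →L[ℝ] EuclideanSpace ℝ (Fin d))
    (hu : ∀ x ∈ ζ '' B, HasFDerivAt u (Du x) x)
    (hint : IntegrableOn (fun x => ‖u x‖ ^ 2 + ‖Du x‖ ^ 2) (ζ '' B)) :
    ∫ s in B, (‖u (ζ s)‖ ^ 2 + ‖(Du (ζ s)).comp (F s)‖ ^ 2)
      ≤ Jm⁻¹ * (1 + C ^ 2) * ∫ x in ζ '' B, (‖u x‖ ^ 2 + ‖Du x‖ ^ 2) := by
  have hF' : ∀ s ∈ B, HasFDerivWithinAt ζ (F s) B s := fun s hs =>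
    (hF s hs).hasFDerivWithinAt
  have hchg :
      ∫ x in ζ '' B, (‖u x‖ ^ 2 + ‖Du x‖ ^ 2)
        = ∫ s in B, |(F s).det| • (‖u (ζ s)‖ ^ 2 + ‖Du (ζ s)‖ ^ 2) :=
    MeasureTheory.integral_image_eq_integral_abs_det_fderiv_smul volume hB hF' hinj _
  have hintB : IntegrableOn
      (fun s => |(F s).det| • (‖u (ζ s)‖ ^ 2 + ‖Du (ζ s)‖ ^ 2)) B := by
    exact (MeasureTheory.integrableOn_image_iff_integrableOn_abs_det_fderiv_smul
      volume hB hF' hinj (fun x => ‖u x‖ ^ 2 + ‖Du x‖ ^ 2)).mp hint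
  have key : ∫ s in B, (‖u (ζ s)‖ ^ 2 + ‖(Du (ζ s)).comp (F s)‖ ^ 2)
      ≤ ∫ s in B, Jm⁻¹ * (1 + C ^ 2) *
        (|(F s).det| • (‖u (ζ s)‖ ^ 2 + ‖Du (ζ s)‖ ^ 2)) := by
    apply MeasureTheory.integral_mono_of_nonneg
    · filter_upwards with s
      positivity
    · exact hintB.const_mul _
    · filter_upwards [MeasureTheory.ae_restrict_mem hB] with s hs
      have hdet' : Jm ≤ |(F s).det| := le_trans (hdet s hs) (le_abs_self _)
      have h1 : ‖(Du (ζ s)).comp (F s)‖ ^ 2 ≤ C ^ 2 * ‖Du (ζ s)‖ ^ 2 := by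
        have := ContinuousLinearMap.opNorm_comp_le (Du (ζ s)) (F s)
        have h2 : ‖(Du (ζ s)).comp (F s)‖ ≤ ‖Du (ζ s)‖ * C :=
          le_trans this (mul_le_mul_of_nonneg_left (hnorm s hs) (norm_nonneg _))
        calc ‖(Du (ζ s)).comp (F s)‖ ^ 2 ≤ (‖Du (ζ s)‖ * C) ^ 2 := by
              apply pow_le_pow_left₀ (norm_nonneg _) h2
          _ = C ^ 2 * ‖Du (ζ s)‖ ^ 2 := by ring
      have hstep : ‖u (ζ s)‖ ^ 2 + ‖(Du (ζ s)).comp (F s)‖ ^ 2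
          ≤ (1 + C ^ 2) * (‖u (ζ s)‖ ^ 2 + ‖Du (ζ s)‖ ^ 2) := by nlinarith [sq_nonneg ‖u (ζ s)‖, sq_nonneg ‖Du (ζ s)‖, sq_nonneg C]
      have hJ : (1 : ℝ) ≤ Jm⁻¹ * |(F s).det| := by
        rw [← div_eq_inv_mul, le_div_iff₀ hJm, one_mul]
        exact hdet'
      have hnn : (0:ℝ) ≤ (1 + C ^ 2) * (‖u (ζ s)‖ ^ 2 + ‖Du (ζ s)‖ ^ 2) := by positivity
      calc ‖u (ζ s)‖ ^ 2 + ‖(Du (ζ s)).comp (F s)‖ ^ 2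
          ≤ (1 + C ^ 2) * (‖u (ζ s)‖ ^ 2 + ‖Du (ζ s)‖ ^ 2) := hstep
        _ = 1 * ((1 + C ^ 2) * (‖u (ζ s)‖ ^ 2 + ‖Du (ζ s)‖ ^ 2)) := by ring
        _ ≤ (Jm⁻¹ * |(F s).det|) * ((1 + C ^ 2) * (‖u (ζ s)‖ ^ 2 + ‖Du (ζ s)‖ ^ 2)) :=
            mul_le_mul_of_nonneg_right hJ hnn
        _ = Jm⁻¹ * (1 + C ^ 2) * (|(F s).det| • (‖u (ζ s)‖ ^ 2 + ‖Du (ζ s)‖ ^ 2)) := by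
            rw [smul_eq_mul]; ring
  calc ∫ s in B, (‖u (ζ s)‖ ^ 2 + ‖(Du (ζ s)).comp (F s)‖ ^ 2)
      ≤ ∫ s in B, Jm⁻¹ * (1 + C ^ 2) *
        (|(F s).det| • (‖u (ζ s)‖ ^ 2 + ‖Du (ζ s)‖ ^ 2)) := key
    _ = Jm⁻¹ * (1 + C ^ 2) *
        ∫ s in B, |(F s).det| • (‖u (ζ s)‖ ^ 2 + ‖Du (ζ s)‖ ^ 2) :=
        MeasureTheory.integral_const_mul _ _
    _ = Jm⁻¹ * (1 + C ^ 2) * ∫ x in ζ '' B, (‖u x‖ ^ 2 + ‖Du x‖ ^ 2) := by rw [hchg]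
end

section
/- Let d ≥ 1, let I ⊆ ℝ be an open interval, and let ρ : ℝ^d × ℝ → ℝ and u : ℝ^d × ℝ → ℝ^d be continuously differentiable (C¹ jointly in space and time). Suppose there is a compact set K ⊆ ℝ^d such that ρ(x,t) = 0 for every x ∉ K and t ∈ I, and suppose the balance of mass ρ̇(x,t) + ρ(x,t)·div u(x,t) = 0 holds for every x ∈ ℝ^d and t ∈ I. Define the kinetic energy density κ(x,t) = (1/2)·ρ(x,t)·‖u(x,t)‖² and the material acceleration u̇(x,t) = ∂ₜu(x,t) + Dₓu(x,t)·u(x,t). Then for every t₀ ∈ I the function t ↦ ∫_{ℝ^d} κ(x,t) dx has derivative at t₀ equal to ∫_{ℝ^d} ρ(x,t₀)·⟨u̇(x,t₀), u(x,t₀)⟩ dx. -/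
open MeasureTheory Matrix

/-- Spatial divergence of a vector field on `ℝ^d`: the trace of its Jacobian. -/
noncomputable def sdiv {d : ℕ} (f : (Fin d → ℝ) → (Fin d → ℝ)) (x : Fin d → ℝ) : ℝ :=
  ∑ i, fderiv ℝ f x (Pi.single i 1) i

/-- Material time derivative of a scalar field: `∂ₜf + ⟨∇ₓf, u⟩`. -/
noncomputable def matDeriv {d : ℕ} (f : (Fin d → ℝ) × ℝ → ℝ)
    (u : (Fin d → ℝ) × ℝ → (Fin d → ℝ)) (x : Fin d → ℝ) (t : ℝ) : ℝ :=
  deriv (fun τ => f (x, τ)) t + fderiv ℝ (fun y => f (y, t)) x (u (x, t))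

/-- Material acceleration `u̇ = ∂ₜu + (Dₓu)u` of a velocity field. -/
noncomputable def matAccel {d : ℕ} (u : (Fin d → ℝ) × ℝ → Fin d → ℝ)
    (x : Fin d → ℝ) (t : ℝ) : Fin d → ℝ :=
  deriv (fun τ => u (x, τ)) t + fderiv ℝ (fun y => u (y, t)) x (u (x, t))


/-!
The material derivative is the space-time derivative in the direction `(u, 1)`, so for the
kinetic energy density `κ = ½ρ|u|²` the product rule gives `κ̇ = ½ρ̇|u|² + ρ⟨u̇, u⟩`, and
`∂ₜκ + div (κu) = κ̇ + κ div u`. Under the balance of mass these combine to the pointwise identity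
`ρ⟨u̇, u⟩ = ∂ₜκ + div (κu)`. The flux `κu` is C¹ with compact support, so its divergence integrates
to zero, and `∂ₜκ` is continuous and vanishes off `K` near `t₀`, so `∂ₜ` commutes with `∫` by
dominated convergence.
-/

open Filter Topology

section IntegralFDeriv

variable {E F : Type*} [NormedAddCommGroup E] [NormedSpace ℝ E] [MeasurableSpace E]
  {μ : Measure E} [NormedAddCommGroup F] [NormedSpace ℝ F] {g : E → F}

theorem integrable_fderiv_apply [OpensMeasurableSpace E] [IsFiniteMeasureOnCompacts μ]
    (hg : ContDiff ℝ 1 g) (hcs : HasCompactSupport g) (v : E) : Integrable (fderiv ℝ g · v) μ :=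
  ((hg.continuous_fderiv one_ne_zero).clm_apply continuous_const).integrable_of_hasCompactSupport
    (hcs.fderiv_apply ℝ v)

theorem integral_fderiv_apply_eq_zero [FiniteDimensional ℝ E] [BorelSpace E] [μ.IsAddHaarMeasure]
    (hg : ContDiff ℝ 1 g) (hcs : HasCompactSupport g) (v : E) : ∫ x, fderiv ℝ g x v ∂μ = 0 := by
  -- integration by parts against the constant function `1`
  simpa using integral_smul_fderiv_eq_neg_fderiv_smul_of_integrable (f := fun _ => (1 : ℝ))
    (by simp) (by simpa using integrable_fderiv_apply hg hcs v)
    (by simpa using hg.continuous.integrable_of_hasCompactSupport hcs)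
    (fun _ _ => differentiableAt_const _) (fun x _ => hg.differentiable one_ne_zero x)

end IntegralFDeriv

section Divergence

variable {d : ℕ} {g : (Fin d → ℝ) → Fin d → ℝ}

theorem sdiv_eq_sum_fderiv {x : Fin d → ℝ} (hg : DifferentiableAt ℝ g x) :
    sdiv g x = ∑ i, fderiv ℝ (g · i) x (Pi.single i 1) := by
  simp [sdiv, fderiv_apply hg]

theorem integrable_sdiv (hg : ContDiff ℝ 1 g) (hcs : HasCompactSupport g) :
    Integrable (sdiv g) := by
  simp only [funext fun x => sdiv_eq_sum_fderiv (hg.differentiable one_ne_zero x)]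
  exact integrable_finsetSum _ fun i _ => integrable_fderiv_apply (contDiff_pi.mp hg i)
    (hcs.comp_left (g := fun y : Fin d → ℝ => y i) rfl) _

theorem integral_sdiv_eq_zero (hg : ContDiff ℝ 1 g) (hcs : HasCompactSupport g) :
    ∫ x, sdiv g x = 0 := by
  have hgi : ∀ i, ContDiff ℝ 1 (g · i) := contDiff_pi.mp hg
  have hcsi : ∀ i, HasCompactSupport (g · i) := fun i =>
    hcs.comp_left (g := fun y : Fin d → ℝ => y i) rfl
  simp only [sdiv_eq_sum_fderiv (hg.differentiable one_ne_zero _)]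
  rw [integral_finsetSum _ fun i _ => integrable_fderiv_apply (hgi i) (hcsi i) _]
  exact Finset.sum_eq_zero fun i _ => integral_fderiv_apply_eq_zero (hgi i) (hcsi i) _

end Divergence

section SpaceTime

variable {E F : Type*} [NormedAddCommGroup E] [NormedSpace ℝ E] [NormedAddCommGroup F]
  [NormedSpace ℝ F] {f : E × ℝ → F} {x : E} {t : ℝ}

theorem DifferentiableAt.slice (hf : DifferentiableAt ℝ f (x, t)) :
    DifferentiableAt ℝ (fun y => f (y, t)) x :=
  hf.comp x (differentiableAt_id.prodMk (differentiableAt_const t))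

theorem fderiv_slice_apply (hf : DifferentiableAt ℝ f (x, t)) (v : E) :
    fderiv ℝ (fun y => f (y, t)) x v = fderiv ℝ f (x, t) (v, 0) := by
  have h : HasFDerivAt (fun y => f (y, t)) ((fderiv ℝ f (x, t)).comp (.inl ℝ E ℝ)) x :=
    hf.hasFDerivAt.comp x (hasFDerivAt_prodMk_left x t)
  rw [h.fderiv]
  rfl

theorem hasDerivAt_time_slice (hf : DifferentiableAt ℝ f (x, t)) :
    HasDerivAt (fun τ => f (x, τ)) (fderiv ℝ f (x, t) (0, 1)) t :=
  hf.hasFDerivAt.comp_hasDerivAt t ((hasDerivAt_const t x).prodMk (hasDerivAt_id t))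

end SpaceTime

section Material

variable {d : ℕ} {u : (Fin d → ℝ) × ℝ → Fin d → ℝ} {x : Fin d → ℝ} {t : ℝ}

theorem matDeriv_eq_fderiv {f : (Fin d → ℝ) × ℝ → ℝ} (hf : DifferentiableAt ℝ f (x, t)) :
    matDeriv f u x t = fderiv ℝ f (x, t) (u (x, t), 1) := by
  rw [matDeriv, (hasDerivAt_time_slice hf).deriv, fderiv_slice_apply hf, ← map_add]
  simp

theorem matAccel_eq_fderiv (hu : DifferentiableAt ℝ u (x, t)) :
    matAccel u x t = fderiv ℝ u (x, t) (u (x, t), 1) := by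
  rw [matAccel, (hasDerivAt_time_slice hu).deriv, fderiv_slice_apply hu, ← map_add]
  simp

theorem sdiv_fun_smul {φ : (Fin d → ℝ) → ℝ} {w : (Fin d → ℝ) → Fin d → ℝ}
    (hφ : DifferentiableAt ℝ φ x) (hw : DifferentiableAt ℝ w x) :
    sdiv (fun y => φ y • w y) x = fderiv ℝ φ x (w x) + φ x * sdiv w x := by
  conv_rhs => rw [pi_eq_sum_univ' (w x), map_sum]
  simp only [sdiv, fderiv_fun_smul hφ hw, map_smul, Finset.mul_sum, ← Finset.sum_add_distrib]
  refine Finset.sum_congr rfl fun i _ => ?_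
  simp only [_root_.add_apply, _root_.smul_apply,
    ContinuousLinearMap.smulRight_apply, Pi.add_apply, Pi.smul_apply, smul_eq_mul]
  ring

end Material

section KineticEnergy

variable {E : Type*} [NormedAddCommGroup E] [NormedSpace ℝ E] {n : ℕ}

noncomputable def kineticEnergy {X : Type*} (ρ : X → ℝ) (u : X → Fin n → ℝ) (q : X) : ℝ :=
  1 / 2 * ρ q * (u q ⬝ᵥ u q)

theorem fderiv_dotProduct_self_apply {u : E → Fin n → ℝ} {p : E} (hu : DifferentiableAt ℝ u p)
    (w : E) : fderiv ℝ (fun q => u q ⬝ᵥ u q) p w = 2 * (fderiv ℝ u p w ⬝ᵥ u p) := by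
  have hui : ∀ i, DifferentiableAt ℝ (u · i) p := differentiableAt_pi.mp hu
  simp only [dotProduct]
  rw [fderiv_fun_sum fun i _ => (hui i).fun_mul (hui i)]
  simp only [fderiv_fun_mul (hui _) (hui _), fderiv_apply hu, _root_.sum_apply,
    _root_.add_apply, _root_.smul_apply, ContinuousLinearMap.comp_apply,
    ContinuousLinearMap.proj_apply, smul_eq_mul, Finset.mul_sum]
  exact Finset.sum_congr rfl fun i _ => by ring

theorem fderiv_kineticEnergy_apply {ρ : E → ℝ} {u : E → Fin n → ℝ} {p : E}
    (hρ : DifferentiableAt ℝ ρ p) (hu : DifferentiableAt ℝ u p) (w : E) :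
    fderiv ℝ (kineticEnergy ρ u) p w
      = 1 / 2 * fderiv ℝ ρ p w * (u p ⬝ᵥ u p) + ρ p * (fderiv ℝ u p w ⬝ᵥ u p) := by
  have hu2 : DifferentiableAt ℝ (fun q => u q ⬝ᵥ u q) p := by
    simp only [dotProduct]
    fun_prop
  change fderiv ℝ (fun q => 1 / 2 * ρ q * (u q ⬝ᵥ u q)) p w = _
  rw [fderiv_fun_mul (hρ.const_mul _) hu2, fderiv_const_mul hρ]
  simp only [_root_.add_apply, _root_.smul_apply,
    fderiv_dotProduct_self_apply hu, smul_eq_mul]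
  ring

end KineticEnergy

section Balance

variable {d : ℕ} {ρ : (Fin d → ℝ) × ℝ → ℝ} {u : (Fin d → ℝ) × ℝ → Fin d → ℝ}
  {x : Fin d → ℝ} {t : ℝ}

theorem fderiv_time_add_sdiv_smul {κ : (Fin d → ℝ) × ℝ → ℝ} (hκ : DifferentiableAt ℝ κ (x, t))
    (hu : DifferentiableAt ℝ u (x, t)) :
    fderiv ℝ κ (x, t) (0, 1) + sdiv (fun y => κ (y, t) • u (y, t)) x
      = matDeriv κ u x t + κ (x, t) * sdiv (fun y => u (y, t)) x := by
  rw [sdiv_fun_smul hκ.slice hu.slice, fderiv_slice_apply hκ, matDeriv_eq_fderiv hκ,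
    ← add_assoc, ← map_add]
  simp

theorem mul_matAccel_dotProduct_eq_of_mass_balance (hρ : DifferentiableAt ℝ ρ (x, t))
    (hu : DifferentiableAt ℝ u (x, t))
    (hmass : matDeriv ρ u x t + ρ (x, t) * sdiv (fun y => u (y, t)) x = 0) :
    ρ (x, t) * (matAccel u x t ⬝ᵥ u (x, t))
      = fderiv ℝ (kineticEnergy ρ u) (x, t) (0, 1)
        + sdiv (fun y => kineticEnergy ρ u (y, t) • u (y, t)) x := by
  have hκ : DifferentiableAt ℝ (kineticEnergy ρ u) (x, t) := by
    unfold kineticEnergy dotProduct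
    fun_prop
  rw [fderiv_time_add_sdiv_smul hκ hu, matDeriv_eq_fderiv hκ, fderiv_kineticEnergy_apply hρ hu,
    ← matDeriv_eq_fderiv hρ, ← matAccel_eq_fderiv hu, kineticEnergy]
  linear_combination (-(u (x, t) ⬝ᵥ u (x, t)) / 2) * hmass

end Balance

section ParametricIntegral

variable {E F : Type*} [NormedAddCommGroup E] [NormedSpace ℝ E] [NormedAddCommGroup F]
  [NormedSpace ℝ F] {f : E × ℝ → F} {K : Set E} {I : Set ℝ}

theorem fderiv_eq_zero_of_vanishing_off (hK : IsClosed K) (hI : IsOpen I)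
    (hvanish : ∀ t ∈ I, ∀ x ∉ K, f (x, t) = 0) {x : E} {t : ℝ} (hx : x ∉ K) (ht : t ∈ I) :
    fderiv ℝ f (x, t) = 0 := by
  have hloc : f =ᶠ[𝓝 (x, t)] fun _ => 0 :=
    Filter.eventuallyEq_of_mem ((hK.isOpen_compl.prod hI).mem_nhds ⟨hx, ht⟩)
      fun p hp => hvanish p.2 hp.2 p.1 hp.1
  rw [hloc.fderiv_eq, fderiv_const_apply]

theorem hasDerivAt_integral_of_vanishing_off [MeasurableSpace E] [OpensMeasurableSpace E]
    {μ : Measure E} [IsFiniteMeasureOnCompacts μ] (hf : ContDiff ℝ 1 f) (hK : IsCompact K)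
    (hI : IsOpen I) (hvanish : ∀ t ∈ I, ∀ x ∉ K, f (x, t) = 0) {t₀ : ℝ} (ht₀ : t₀ ∈ I) :
    Integrable (fun x => fderiv ℝ f (x, t₀) (0, 1)) μ ∧
      HasDerivAt (fun t => ∫ x, f (x, t) ∂μ) (∫ x, fderiv ℝ f (x, t₀) (0, 1) ∂μ) t₀ := by
  obtain ⟨ε, hε, hball⟩ := Metric.nhds_basis_closedBall.mem_iff.mp (hI.mem_nhds ht₀)
  have hf' : Continuous fun p : E × ℝ => fderiv ℝ f p (0, 1) :=
    (hf.continuous_fderiv one_ne_zero).clm_apply continuous_const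
  obtain ⟨C, hC⟩ := (hK.prod (isCompact_closedBall t₀ ε)).exists_bound_of_continuousOn
    hf'.continuousOn
  have hslice_int : ∀ t ∈ I, Integrable (fun x => f (x, t)) μ := fun t ht =>
    (hf.continuous.comp (.prodMk_left t)).integrable_of_hasCompactSupport
      (HasCompactSupport.intro hK (hvanish t ht))
  have h_bound : ∀ x, ∀ t ∈ Metric.ball t₀ ε,
      ‖fderiv ℝ f (x, t) (0, 1)‖ ≤ K.indicator (fun _ => C) x := by
    intro x t ht
    have ht' := Metric.ball_subset_closedBall ht
    by_cases hx : x ∈ K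
    · simpa [Set.indicator_of_mem hx] using hC (x, t) ⟨hx, ht'⟩
    · simp [Set.indicator_of_notMem hx,
        fderiv_eq_zero_of_vanishing_off hK.isClosed hI hvanish hx (hball ht')]
  have hbound_int : Integrable (K.indicator fun _ => C) μ :=
    (integrable_indicator_iff hK.measurableSet).2 (integrableOn_const hK.measure_lt_top.ne)
  have hderiv_int : Integrable (fun x => fderiv ℝ f (x, t₀) (0, 1)) μ :=
    (hf'.comp (.prodMk_left t₀)).integrable_of_hasCompactSupport <| HasCompactSupport.intro hK
      fun x hx => by simp [fderiv_eq_zero_of_vanishing_off hK.isClosed hI hvanish hx ht₀]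
  exact hasDerivAt_integral_of_dominated_loc_of_deriv_le (Metric.ball_mem_nhds t₀ hε)
    (Filter.mem_of_superset (hI.mem_nhds ht₀) fun t ht => (hslice_int t ht).1)
    (hslice_int t₀ ht₀) hderiv_int.1 (.of_forall h_bound) hbound_int
    (.of_forall fun x t _ => hasDerivAt_time_slice (hf.differentiable one_ne_zero (x, t)))

end ParametricIntegral

theorem stmt12_general {d : ℕ} (a b : ℝ) (I : Set ℝ) (hI : I = Set.Ioo a b)
    (ρ : (Fin d → ℝ) × ℝ → ℝ) (u : (Fin d → ℝ) × ℝ → (Fin d → ℝ))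
    (hρ : ContDiff ℝ 1 ρ) (hu : ContDiff ℝ 1 u)
    (K : Set (Fin d → ℝ)) (hK : IsCompact K)
    (hsupp : ∀ t ∈ I, ∀ x ∉ K, ρ (x, t) = 0)
    (hmass : ∀ (x : Fin d → ℝ), ∀ t ∈ I,
      matDeriv ρ u x t + ρ (x, t) * sdiv (fun y => u (y, t)) x = 0) :
    ∀ t₀ ∈ I,
      HasDerivAt (fun t => ∫ x, (1 / 2) * ρ (x, t) * (u (x, t) ⬝ᵥ u (x, t)))
        (∫ x, ρ (x, t₀) * (matAccel u x t₀ ⬝ᵥ u (x, t₀))) t₀ := by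
  intro t₀ ht₀
  have hκ : ContDiff ℝ 1 (kineticEnergy ρ u) := by
    unfold kineticEnergy dotProduct
    fun_prop
  have hκ_supp : ∀ t ∈ I, ∀ x ∉ K, kineticEnergy ρ u (x, t) = 0 := fun t ht x hx => by
    simp [kineticEnergy, hsupp t ht x hx]
  obtain ⟨hκ_int, hderiv⟩ :=
    hasDerivAt_integral_of_vanishing_off (μ := volume) hκ hK (hI ▸ isOpen_Ioo) hκ_supp ht₀
  set flux := fun y => kineticEnergy ρ u (y, t₀) • u (y, t₀)
  have hflux : ContDiff ℝ 1 flux := by fun_prop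
  have hflux_supp : HasCompactSupport flux :=
    HasCompactSupport.intro hK fun x hx => by simp [flux, hκ_supp t₀ ht₀ x hx]
  have hpoint : ∀ x, ρ (x, t₀) * (matAccel u x t₀ ⬝ᵥ u (x, t₀))
      = fderiv ℝ (kineticEnergy ρ u) (x, t₀) (0, 1) + sdiv flux x := fun x =>
    mul_matAccel_dotProduct_eq_of_mass_balance (hρ.differentiable one_ne_zero _)
      (hu.differentiable one_ne_zero _) (hmass x t₀ ht₀)
  rw [integral_congr_ae (.of_forall hpoint), integral_add hκ_int (integrable_sdiv hflux hflux_supp),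
    integral_sdiv_eq_zero hflux hflux_supp, add_zero]
  exact hderiv

/-- Kinetic-energy transport identity on `ℝ^d` with compactly supported mass density:
under the balance of mass, `d/dt ∫ κ dx = ∫ ρ ⟨u̇, u⟩ dx` with `κ = (1/2)ρ‖u‖²`. -/
theorem stmt12 {d : ℕ} (hd : 1 ≤ d) (a b : ℝ) (I : Set ℝ) (hI : I = Set.Ioo a b)
    (ρ : (Fin d → ℝ) × ℝ → ℝ) (u : (Fin d → ℝ) × ℝ → (Fin d → ℝ))
    (hρ : ContDiff ℝ 1 ρ) (hu : ContDiff ℝ 1 u)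
    (K : Set (Fin d → ℝ)) (hK : IsCompact K)
    (hsupp : ∀ t ∈ I, ∀ x ∉ K, ρ (x, t) = 0)
    (hmass : ∀ (x : Fin d → ℝ), ∀ t ∈ I,
      matDeriv ρ u x t + ρ (x, t) * sdiv (fun y => u (y, t)) x = 0) :
    ∀ t₀ ∈ I,
      HasDerivAt (fun t => ∫ x, (1 / 2) * ρ (x, t) * (u (x, t) ⬝ᵥ u (x, t)))
        (∫ x, ρ (x, t₀) * (matAccel u x t₀ ⬝ᵥ u (x, t₀))) t₀ :=
  stmt12_general a b I hI ρ u hρ hu K hK hsupp hmass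
end
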